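/- arXiv:1509.06503 — 7 statements merged into one kernel-verified Lean document; each statement's English description precedes it below -/
import Mathlib

section
/- If (≈_i^{12}, ≈_e^{12}) is a refinement of generic machine M₁ into M₂ and (≈_i^{23}, ≈_e^{23}) is a refinement of M₂ into M₃, then the pair of composed relations (≈_i^{23} ∘ ≈_i^{12}, ≈_e^{23} ∘ ≈_e^{12}) is a refinement of M₁ into M₃. -/
/-! ### Generic machines, traces, refinement, observation, TINI -/

/-- A generic machine: states, events, inputs, a step relation (with optional
event; `none` is the silent action τ), and an initialization function. -/
structure Machine (S E I : Type) where
  step : S → Option E → S → Prop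
  init : I → S

/-- `Traces step s t s'`: the machine runs from `s` to `s'` emitting the
(non-silent) events collected in the list `t`. -/
inductive Traces {S E : Type} (step : S → Option E → S → Prop) : S → List E → S → Prop
  | nil (s : S) : Traces step s [] s
  | event {s₁ s₂ s₃ : S} {e : E} {t : List E} :
      step s₁ (some e) s₂ → Traces step s₂ t s₃ → Traces step s₁ (e :: t) s₃
  | silent {s₁ s₂ s₃ : S} {t : List E} :
      step s₁ none s₂ → Traces step s₂ t s₃ → Traces step s₁ t s₃

/-- `Emits step s t`: from `s` the machine can emit the trace `t`. -/
def Emits {S E : Type} (step : S → Option E → S → Prop) (s : S) (t : List E) : Prop :=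
  ∃ s', Traces step s t s'

/-- Refinement of `M₁` into `M₂` via relations on inputs and events. -/
def Refinement {S₁ E₁ I₁ S₂ E₂ I₂ : Type} (M₁ : Machine S₁ E₁ I₁) (M₂ : Machine S₂ E₂ I₂)
    (Ri : I₁ → I₂ → Prop) (Re : E₁ → E₂ → Prop) : Prop :=
  ∀ i₁ i₂ t₂, Ri i₁ i₂ → Emits M₂.step (M₂.init i₂) t₂ →
    ∃ t₁, Emits M₁.step (M₁.init i₁) t₁ ∧ List.Forall₂ Re t₁ t₂

/-- Refinement via states. -/
def StateRefinement {S₁ E₁ I₁ S₂ E₂ I₂ : Type} (M₁ : Machine S₁ E₁ I₁) (M₂ : Machine S₂ E₂ I₂)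
    (Rs : S₁ → S₂ → Prop) (Re : E₁ → E₂ → Prop) : Prop :=
  ∀ s₁ s₂ t₂, Rs s₁ s₂ → Emits M₂.step s₂ t₂ →
    ∃ t₁, Emits M₁.step s₁ t₁ ∧ List.Forall₂ Re t₁ t₂

open Classical in
/-- Filter the unobservable events out of a trace. -/
noncomputable def filterObs {E : Type} (obs : E → Prop) : List E → List E
  | [] => []
  | e :: t => if obs e then e :: filterObs obs t else filterObs obs t

/-- Indistinguishability of traces: pairwise equal up to the length of the shorter. -/
inductive IndistTrace {E : Type} : List E → List E → Prop
  | nilL (t : List E) : IndistTrace [] t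
  | nilR (t : List E) : IndistTrace t []
  | cons (e : E) {t₁ t₂ : List E} : IndistTrace t₁ t₂ → IndistTrace (e :: t₁) (e :: t₂)

/-- Observability of actions: silent actions are never observable. -/
def ObsAct {E : Type} (obs : E → Prop) (α : Option E) : Prop :=
  ∃ e, α = some e ∧ obs e

/-- Indistinguishability of actions: equal, or both unobservable. -/
def ActIndist {E : Type} (obs : E → Prop) (α₁ α₂ : Option E) : Prop :=
  α₁ = α₂ ∨ (¬ ObsAct obs α₁ ∧ ¬ ObsAct obs α₂)

/-- Indistinguishability of events: equal, or both unobservable. -/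
def EvIndist {E : Type} (obs : E → Prop) (e₁ e₂ : E) : Prop :=
  e₁ = e₂ ∨ (¬ obs e₁ ∧ ¬ obs e₂)

/-- Termination-insensitive noninterference for a machine with a notion of
observation `(Ω, obsE, indistI)`. -/
def TINI {S E I Ω : Type} (M : Machine S E I)
    (obsE : Ω → E → Prop) (indistI : Ω → I → I → Prop) : Prop :=
  ∀ o i₁ i₂ t₁ t₂, indistI o i₁ i₂ →
    Emits M.step (M.init i₁) t₁ → Emits M.step (M.init i₂) t₂ →
    IndistTrace (filterObs (obsE o) t₁) (filterObs (obsE o) t₂)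

/-- Refinements compose: if `(Ri₁₂, Re₁₂)` is a refinement of `M₁`
into `M₂` and `(Ri₂₃, Re₂₃)` a refinement of `M₂` into `M₃`, then the composed
relations form a refinement of `M₁` into `M₃`. -/
theorem refinement_composition {S₁ E₁ I₁ S₂ E₂ I₂ S₃ E₃ I₃ : Type}
    (M₁ : Machine S₁ E₁ I₁) (M₂ : Machine S₂ E₂ I₂) (M₃ : Machine S₃ E₃ I₃)
    (Ri₁₂ : I₁ → I₂ → Prop) (Re₁₂ : E₁ → E₂ → Prop)
    (Ri₂₃ : I₂ → I₃ → Prop) (Re₂₃ : E₂ → E₃ → Prop)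
    (href₁₂ : Refinement M₁ M₂ Ri₁₂ Re₁₂)
    (href₂₃ : Refinement M₂ M₃ Ri₂₃ Re₂₃) :
    Refinement M₁ M₃
      (fun i₁ i₃ => ∃ i₂, Ri₁₂ i₁ i₂ ∧ Ri₂₃ i₂ i₃)
      (fun e₁ e₃ => ∃ e₂, Re₁₂ e₁ e₂ ∧ Re₂₃ e₂ e₃) := by
  rintro i₁ i₃ t₃ ⟨i₂, h12, h23⟩ h3
  obtain ⟨t₂, he₂, hf₂⟩ := href₂₃ i₂ i₃ t₃ h23 h3
  obtain ⟨t₁, he₁, hf₁⟩ := href₁₂ i₁ i₂ t₂ h12 he₂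
  refine ⟨t₁, he₁, ?_⟩
  clear he₁ he₂ h3
  induction hf₁ generalizing t₃ with
  | nil => cases hf₂; exact List.Forall₂.nil
  | cons h1 _ ih =>
    cases hf₂ with
    | cons h2 hrest => exact List.Forall₂.cons ⟨_, h1, h2⟩ (ih _ hrest)
end

section
/- (Unwinding conditions imply TINI.) Let M = (S, E, I, step, init) be a generic machine with a notion of observation (Ω, ⌊·⌋, ≈ⁱ). Suppose for each observer o ∈ Ω there exist a relation ≈ˢ_o ⊆ S × S (indistinguishability of states) and a predicate ⌊o⌋(s) on states (observability of states) satisfying the four sanity conditions: (1) i₁ ≈ⁱ_o i₂ implies init(i₁) ≈ˢ_o init(i₂); (2) s₁ ≈ˢ_o s₂ implies s₂ ≈ˢ_o s₁; (3) s₁ ≈ˢ_o s₂ implies (⌊o⌋(s₁) ⟺ ⌊o⌋(s₂)); (4) if action α is observable by o and s steps with action α, then ⌊o⌋(s); and the three unwinding conditions, assuming s₁ ≈ˢ_o s₂ and s₁ steps with action α₁ to s₁': (5) if ⌊o⌋(s₁) and s₂ steps with action α₂ to s₂', then α₁ ≈ᵃ_o α₂ and s₁' ≈ˢ_o s₂';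 (6) if ¬⌊o⌋(s₁) and ¬⌊o⌋(s₁'), then s₁' ≈ˢ_o s₂; (7) if ¬⌊o⌋(s₁), ⌊o⌋(s₁'), ⌊o⌋(s₂'), and s₂ steps with action α₂ to s₂', then s₁' ≈ˢ_o s₂'. Then M satisfies TINI. -/
theorem unwinding_key {S E Ω : Type} (step : S → Option E → S → Prop)
    (obsE : Ω → E → Prop)
    (indistS : Ω → S → S → Prop) (obsS : Ω → S → Prop) (o : Ω)
    (sanity2 : ∀ s₁ s₂, indistS o s₁ s₂ → indistS o s₂ s₁)
    (sanity3 : ∀ s₁ s₂, indistS o s₁ s₂ → (obsS o s₁ ↔ obsS o s₂))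
    (sanity4 : ∀ s α s', ObsAct (obsE o) α → step s α s' → obsS o s)
    (unwind1 : ∀ s₁ s₂ α₁ s₁' α₂ s₂', indistS o s₁ s₂ → step s₁ α₁ s₁' →
      obsS o s₁ → step s₂ α₂ s₂' →
      ActIndist (obsE o) α₁ α₂ ∧ indistS o s₁' s₂')
    (unwind2 : ∀ s₁ s₂ α₁ s₁', indistS o s₁ s₂ → step s₁ α₁ s₁' →
      ¬ obsS o s₁ → ¬ obsS o s₁' → indistS o s₁' s₂)
    (unwind3 : ∀ s₁ s₂ α₁ s₁' α₂ s₂', indistS o s₁ s₂ → step s₁ α₁ s₁' →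
      ¬ obsS o s₁ → obsS o s₁' → obsS o s₂' → step s₂ α₂ s₂' →
      indistS o s₁' s₂') :
    ∀ {s₁ t₁ s₁'}, Traces step s₁ t₁ s₁' →
    ∀ {s₂ t₂ s₂'}, indistS o s₁ s₂ → Traces step s₂ t₂ s₂' →
      IndistTrace (filterObs (obsE o) t₁) (filterObs (obsE o) t₂) := by
  intro s₁ t₁ s₁' h₁
  induction h₁ with
  | nil s =>
    intro s₂ t₂ s₂' _ _
    simpa [filterObs] using IndistTrace.nilL (filterObs (obsE o) t₂)
  | @event s₁ sm s₁' e t hstep htail IH =>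
    intro s₂ t₂ s₂' hind h₂
    by_cases hobs1 : obsS o s₁
    · cases h₂ with
      | nil =>
        simpa [filterObs] using IndistTrace.nilR (filterObs (obsE o) (e :: t))
      | @event _ s₂m _ e₂ t₂' hstep2 htail2 =>
        obtain ⟨hact, hind'⟩ := unwind1 _ _ _ _ _ _ hind hstep hobs1 hstep2
        rcases hact with heq | ⟨hn1, hn2⟩
        · injection heq with heq; subst heq
          by_cases he : obsE o e
          · simpa [filterObs, he] using IndistTrace.cons e (IH hind' htail2)
          · simpa [filterObs, he] using IH hind' htail2
        · have hne : ¬ obsE o e := fun h => hn1 ⟨e, rfl, h⟩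
          have hne2 : ¬ obsE o e₂ := fun h => hn2 ⟨e₂, rfl, h⟩
          simpa [filterObs, hne, hne2] using IH hind' htail2
      | @silent _ s₂m _ _ hstep2 htail2 =>
        obtain ⟨hact, hind'⟩ := unwind1 _ _ _ _ _ _ hind hstep hobs1 hstep2
        have hne : ¬ obsE o e := by
          rcases hact with heq | ⟨hn1, _⟩
          · exact absurd heq (by simp)
          · exact fun h => hn1 ⟨e, rfl, h⟩
        simpa [filterObs, hne] using IH hind' htail2
    · have hne : ¬ obsE o e := fun h => hobs1 (sanity4 _ _ _ ⟨e, rfl, h⟩ hstep)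
      by_cases hobsm : obsS o sm
      · revert hind
        induction h₂ with
        | nil =>
          intro _
          simpa [filterObs, hne] using
            IndistTrace.nilR (filterObs (obsE o) t)
        | @event s₂ s₂m _ e₂ t₂' hstep2 htail2 IH2 =>
          intro hind
          have hobs2 : ¬ obsS o s₂ := fun h => hobs1 ((sanity3 _ _ hind).mpr h)
          have hne2 : ¬ obsE o e₂ := fun h => hobs2 (sanity4 _ _ _ ⟨e₂, rfl, h⟩ hstep2)
          by_cases hobs2a : obsS o s₂m
          · have hind' := unwind3 _ _ _ _ _ _ hind hstep hobs1 hobsm hobs2a hstep2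
            simpa [filterObs, hne, hne2] using IH hind' htail2
          · have hind' : indistS o s₁ s₂m :=
              sanity2 _ _ (unwind2 _ _ _ _ (sanity2 _ _ hind) hstep2 hobs2 hobs2a)
            simpa [filterObs, hne2] using IH2 hind'
        | @silent s₂ s₂m _ _ hstep2 htail2 IH2 =>
          intro hind
          have hobs2 : ¬ obsS o s₂ := fun h => hobs1 ((sanity3 _ _ hind).mpr h)
          by_cases hobs2a : obsS o s₂m
          · have hind' := unwind3 _ _ _ _ _ _ hind hstep hobs1 hobsm hobs2a hstep2
            simpa [filterObs, hne] using IH hind' htail2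
          · have hind' : indistS o s₁ s₂m :=
              sanity2 _ _ (unwind2 _ _ _ _ (sanity2 _ _ hind) hstep2 hobs2 hobs2a)
            exact IH2 hind'
      · have hind' := unwind2 _ _ _ _ hind hstep hobs1 hobsm
        simpa [filterObs, hne] using IH hind' h₂
  | @silent s₁ sm s₁' t hstep htail IH =>
    intro s₂ t₂ s₂' hind h₂
    by_cases hobs1 : obsS o s₁
    · cases h₂ with
      | nil =>
        exact IndistTrace.nilR _
      | @event _ s₂m _ e₂ t₂' hstep2 htail2 =>
        obtain ⟨hact, hind'⟩ := unwind1 _ _ _ _ _ _ hind hstep hobs1 hstep2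
        have hne2 : ¬ obsE o e₂ := by
          rcases hact with heq | ⟨_, hn2⟩
          · exact absurd heq (by simp)
          · exact fun h => hn2 ⟨e₂, rfl, h⟩
        simpa [filterObs, hne2] using IH hind' htail2
      | @silent _ s₂m _ _ hstep2 htail2 =>
        obtain ⟨_, hind'⟩ := unwind1 _ _ _ _ _ _ hind hstep hobs1 hstep2
        exact IH hind' htail2
    · by_cases hobsm : obsS o sm
      · revert hind
        induction h₂ with
        | nil =>
          intro _
          exact IndistTrace.nilR _
        | @event s₂ s₂m _ e₂ t₂' hstep2 htail2 IH2 =>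
          intro hind
          have hobs2 : ¬ obsS o s₂ := fun h => hobs1 ((sanity3 _ _ hind).mpr h)
          have hne2 : ¬ obsE o e₂ := fun h => hobs2 (sanity4 _ _ _ ⟨e₂, rfl, h⟩ hstep2)
          by_cases hobs2a : obsS o s₂m
          · have hind' := unwind3 _ _ _ _ _ _ hind hstep hobs1 hobsm hobs2a hstep2
            simpa [filterObs, hne2] using IH hind' htail2
          · have hind' : indistS o s₁ s₂m :=
              sanity2 _ _ (unwind2 _ _ _ _ (sanity2 _ _ hind) hstep2 hobs2 hobs2a)
            simpa [filterObs, hne2] using IH2 hind'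
        | @silent s₂ s₂m _ _ hstep2 htail2 IH2 =>
          intro hind
          have hobs2 : ¬ obsS o s₂ := fun h => hobs1 ((sanity3 _ _ hind).mpr h)
          by_cases hobs2a : obsS o s₂m
          · have hind' := unwind3 _ _ _ _ _ _ hind hstep hobs1 hobsm hobs2a hstep2
            exact IH hind' htail2
          · have hind' : indistS o s₁ s₂m :=
              sanity2 _ _ (unwind2 _ _ _ _ (sanity2 _ _ hind) hstep2 hobs2 hobs2a)
            exact IH2 hind'
      · have hind' := unwind2 _ _ _ _ hind hstep hobs1 hobsm
        exact IH hind' h₂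

/-- The unwinding conditions (together with the sanity conditions)
imply TINI for a generic machine. -/
theorem unwinding_implies_tini {S E I Ω : Type} (M : Machine S E I)
    (obsE : Ω → E → Prop) (indistI : Ω → I → I → Prop)
    (indistS : Ω → S → S → Prop) (obsS : Ω → S → Prop)
    (sanity1 : ∀ o i₁ i₂, indistI o i₁ i₂ → indistS o (M.init i₁) (M.init i₂))
    (sanity2 : ∀ o s₁ s₂, indistS o s₁ s₂ → indistS o s₂ s₁)
    (sanity3 : ∀ o s₁ s₂, indistS o s₁ s₂ → (obsS o s₁ ↔ obsS o s₂))
    (sanity4 : ∀ o s α s', ObsAct (obsE o) α → M.step s α s' → obsS o s)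
    (unwind1 : ∀ o s₁ s₂ α₁ s₁' α₂ s₂', indistS o s₁ s₂ → M.step s₁ α₁ s₁' →
      obsS o s₁ → M.step s₂ α₂ s₂' →
      ActIndist (obsE o) α₁ α₂ ∧ indistS o s₁' s₂')
    (unwind2 : ∀ o s₁ s₂ α₁ s₁', indistS o s₁ s₂ → M.step s₁ α₁ s₁' →
      ¬ obsS o s₁ → ¬ obsS o s₁' → indistS o s₁' s₂)
    (unwind3 : ∀ o s₁ s₂ α₁ s₁' α₂ s₂', indistS o s₁ s₂ → M.step s₁ α₁ s₁' →
      ¬ obsS o s₁ → obsS o s₁' → obsS o s₂' → M.step s₂ α₂ s₂' →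
      indistS o s₁' s₂') :
    TINI M obsE indistI := by
  intro o i₁ i₂ t₁ t₂ hI h1 h2
  obtain ⟨s₁', h₁⟩ := h1
  obtain ⟨s₂', h₂⟩ := h2
  exact unwinding_key M.step obsE indistS obsS o (sanity2 o) (sanity3 o) (sanity4 o)
    (unwind1 o) (unwind2 o) (unwind3 o) h₁ (sanity1 o i₁ i₂ hI) h₂
end

section
/- (TINI is preserved by refinement.) Suppose generic machine M₂ refines M₁ by the refinement (≈_i, ≈_e), each machine is equipped with a notion of observation, and for every observer o₂ of M₂ there exists an observer o₁ of M₁ such that for all events e₁, e₁' ∈ E₁, e₂, e₂' ∈ E₂ and inputs i₂, i₂' ∈ I₂: (i) e₁ ≈_e e₂ implies (⌊o₁⌋(e₁) ⟺ ⌊o₂⌋(e₂)); (ii) i₂ ≈ⁱ_{o₂} i₂' implies there exist i₁, i₁' ∈ I₁ with i₁ ≈ⁱ_{o₁} i₁', i₁ ≈_i i₂, and i₁' ≈_i i₂'; (iii) if e₁ ≈ᵃ_{o₁} e₁', e₁ ≈_e e₂, and e₁' ≈_e e₂', then e₂ ≈ᵃ_{o₂} e₂'. Then if M₁ satisfies TINI,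 M₂ also satisfies TINI. -/
/-- TINI is preserved by refinement, under the compatibility
conditions between the two notions of observation. -/
theorem tini_preserved_by_refinement
    {S₁ E₁ I₁ S₂ E₂ I₂ Ω₁ Ω₂ : Type}
    (M₁ : Machine S₁ E₁ I₁) (M₂ : Machine S₂ E₂ I₂)
    (Ri : I₁ → I₂ → Prop) (Re : E₁ → E₂ → Prop)
    (href : Refinement M₁ M₂ Ri Re)
    (obsE₁ : Ω₁ → E₁ → Prop) (indistI₁ : Ω₁ → I₁ → I₁ → Prop)
    (obsE₂ : Ω₂ → E₂ → Prop) (indistI₂ : Ω₂ → I₂ → I₂ → Prop)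
    (hcompat : ∀ o₂ : Ω₂, ∃ o₁ : Ω₁,
      (∀ e₁ e₂, Re e₁ e₂ → (obsE₁ o₁ e₁ ↔ obsE₂ o₂ e₂)) ∧
      (∀ i₂ i₂', indistI₂ o₂ i₂ i₂' →
        ∃ i₁ i₁', indistI₁ o₁ i₁ i₁' ∧ Ri i₁ i₂ ∧ Ri i₁' i₂') ∧
      (∀ e₁ e₁' e₂ e₂', EvIndist (obsE₁ o₁) e₁ e₁' → Re e₁ e₂ → Re e₁' e₂' →
        EvIndist (obsE₂ o₂) e₂ e₂'))
    (htini : TINI M₁ obsE₁ indistI₁) :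
    TINI M₂ obsE₂ indistI₂ := by
  intro o₂ j₁ j₂ u₁ u₂ hind he₁ he₂
  obtain ⟨o₁, hiff, hinp, hEv⟩ := hcompat o₂
  obtain ⟨i₁, i₁', hI, hRi, hRi'⟩ := hinp j₁ j₂ hind
  obtain ⟨t₁, ht₁, hf₁⟩ := href i₁ j₁ u₁ hRi he₁
  obtain ⟨t₁', ht₁', hf₁'⟩ := href i₁' j₂ u₂ hRi' he₂
  have hind₁ := htini o₁ i₁ i₁' t₁ t₁' hI ht₁ ht₁'
  -- filtering lemma
  have hfilt : ∀ {a : List E₁} {b : List E₂}, List.Forall₂ Re a b →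
      List.Forall₂ (fun e₁ e₂ => Re e₁ e₂ ∧ obsE₁ o₁ e₁)
        (filterObs (obsE₁ o₁) a) (filterObs (obsE₂ o₂) b) := by
    intro a b h
    induction h with
    | nil => exact List.Forall₂.nil
    | cons hre _ ih =>
      rename_i e₁ e₂ _ _ _
      by_cases ho : obsE₁ o₁ e₁
      · simp only [filterObs, if_pos ho, if_pos ((hiff _ _ hre).mp ho)]
        exact List.Forall₂.cons ⟨hre, ho⟩ ih
      · simp only [filterObs, if_neg ho,
          if_neg (fun h2 => ho ((hiff _ _ hre).mpr h2))]
        exact ih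
  have h₂ := hfilt hf₁
  have h₂' := hfilt hf₁'
  -- transfer IndistTrace
  clear hfilt hf₁ hf₁' ht₁ ht₁' he₁ he₂ hI hRi hRi' hind htini href
  revert h₂ h₂'
  generalize filterObs (obsE₁ o₁) t₁ = a at hind₁
  generalize filterObs (obsE₁ o₁) t₁' = a' at hind₁
  generalize filterObs (obsE₂ o₂) u₁ = b
  generalize filterObs (obsE₂ o₂) u₂ = b'
  intro h₂ h₂'
  induction hind₁ generalizing b b' with
  | nilL =>
    cases h₂
    exact IndistTrace.nilL _
  | nilR =>
    cases h₂'
    exact IndistTrace.nilR _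
  | cons e hrest ih =>
    cases h₂ with
    | cons hp hq =>
      cases h₂' with
      | cons hp' hq' =>
        rename_i e₂ v₂ e₂' v₂'
        have heq : e₂ = e₂' := by
          have := hEv e e e₂ e₂' (Or.inl rfl) hp.1 hp'.1
          rcases this with h | ⟨hn, _⟩
          · exact h
          · exact absurd ((hiff _ _ hp.1).mp hp.2) hn
        subst heq
        exact IndistTrace.cons _ (ih _ _ hq hq')
end

section
/- The abstract IFC machine, viewed as a generic machine with the stated notion of observation, satisfies TINI: for every observer label o, every pair of indistinguishable inputs (p, args₁, n, L) ≈ⁱ_o (p, args₂, n, L), and every pair of executions from the corresponding initial states emitting traces t₁ and t₂, the filtered traces ⌊t₁⌋_o and ⌊t₂⌋_o are indistinguishable. -/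
/-! ### The abstract IFC machine -/

/-- Labeled atoms: an integer payload together with an IFC label. -/
structure Atom (L : Type) where
  val : ℤ
  lab : L

/-- The instruction set (shared by all machines). -/
inductive Instr : Type where
  | add
  | push (m : ℤ)
  | load
  | store
  | jump
  | bnz (k : ℤ)
  | call
  | ret
  | output

/-- Instruction memories. -/
abbrev InstrMem : Type := ℤ → Option Instr

/-- Stack elements: data atoms or return frames. -/
inductive StkElt (L : Type) : Type where
  | data : Atom L → StkElt L
  | ret : Atom L → StkElt L

/-- Abstract machine states: data memory, stack, program counter. -/
structure AState (L : Type) where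
  mem : ℤ → Option (Atom L)
  stk : List (StkElt L)
  pc : Atom L

/-- Memory update. -/
def updMem {L : Type} (μ : ℤ → Option (Atom L)) (p : ℤ) (a : Atom L) :
    ℤ → Option (Atom L) :=
  fun q => if q = p then some a else μ q

section Abstract

variable {L : Type} [SemilatticeSup L] [OrderBot L]

/-- The step relation of the abstract IFC machine, with fixed instruction
memory `ι`.  Actions are `Option (Atom L)`: `none` is silent, `some a` emits
the event `a`. -/
inductive AStep (ι : InstrMem) : AState L → Option (Atom L) → AState L → Prop
  | add {μ : ℤ → Option (Atom L)} {σ : List (StkElt L)} {n n₁ n₂ : ℤ} {Lpc L₁ L₂ : L} :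
      ι n = some .add →
      AStep ι ⟨μ, .data ⟨n₁, L₁⟩ :: .data ⟨n₂, L₂⟩ :: σ, ⟨n, Lpc⟩⟩ none
              ⟨μ, .data ⟨n₁ + n₂, L₁ ⊔ L₂⟩ :: σ, ⟨n + 1, Lpc⟩⟩
  | push {μ : ℤ → Option (Atom L)} {σ : List (StkElt L)} {n m : ℤ} {Lpc : L} :
      ι n = some (.push m) →
      AStep ι ⟨μ, σ, ⟨n, Lpc⟩⟩ none ⟨μ, .data ⟨m, ⊥⟩ :: σ, ⟨n + 1, Lpc⟩⟩
  | load {μ : ℤ → Option (Atom L)} {σ : List (StkElt L)} {n p m : ℤ} {Lpc L₁ L₂ : L} :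
      ι n = some .load → μ p = some ⟨m, L₂⟩ →
      AStep ι ⟨μ, .data ⟨p, L₁⟩ :: σ, ⟨n, Lpc⟩⟩ none
              ⟨μ, .data ⟨m, L₁ ⊔ L₂⟩ :: σ, ⟨n + 1, Lpc⟩⟩
  | store {μ : ℤ → Option (Atom L)} {σ : List (StkElt L)} {n p m k : ℤ}
      {Lpc L₁ L₂ L₃ : L} :
      ι n = some .store → μ p = some ⟨k, L₃⟩ → L₁ ⊔ Lpc ≤ L₃ →
      AStep ι ⟨μ, .data ⟨p, L₁⟩ :: .data ⟨m, L₂⟩ :: σ, ⟨n, Lpc⟩⟩ none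
              ⟨updMem μ p ⟨m, L₁ ⊔ L₂ ⊔ Lpc⟩, σ, ⟨n + 1, Lpc⟩⟩
  | jump {μ : ℤ → Option (Atom L)} {σ : List (StkElt L)} {n n' : ℤ} {Lpc L₁ : L} :
      ι n = some .jump →
      AStep ι ⟨μ, .data ⟨n', L₁⟩ :: σ, ⟨n, Lpc⟩⟩ none ⟨μ, σ, ⟨n', L₁ ⊔ Lpc⟩⟩
  | bnz {μ : ℤ → Option (Atom L)} {σ : List (StkElt L)} {n m k : ℤ} {Lpc L₁ : L} :
      ι n = some (.bnz k) →
      AStep ι ⟨μ, .data ⟨m, L₁⟩ :: σ, ⟨n, Lpc⟩⟩ none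
              ⟨μ, σ, ⟨n + (if m = 0 then 1 else k), L₁ ⊔ Lpc⟩⟩
  | call {μ : ℤ → Option (Atom L)} {σ : List (StkElt L)} {n n' : ℤ} {Lpc L₁ : L} :
      ι n = some .call →
      AStep ι ⟨μ, .data ⟨n', L₁⟩ :: σ, ⟨n, Lpc⟩⟩ none
              ⟨μ, .ret ⟨n + 1, Lpc⟩ :: σ, ⟨n', L₁ ⊔ Lpc⟩⟩
  | ret {μ : ℤ → Option (Atom L)} {σ : List (StkElt L)} {n : ℤ} {Lpc : L} {pc' : Atom L} :
      ι n = some .ret →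
      AStep ι ⟨μ, .ret pc' :: σ, ⟨n, Lpc⟩⟩ none ⟨μ, σ, pc'⟩
  | output {μ : ℤ → Option (Atom L)} {σ : List (StkElt L)} {n m : ℤ} {Lpc L₁ : L} :
      ι n = some .output →
      AStep ι ⟨μ, .data ⟨m, L₁⟩ :: σ, ⟨n, Lpc⟩⟩ (some ⟨m, L₁ ⊔ Lpc⟩)
              ⟨μ, σ, ⟨n + 1, Lpc⟩⟩

/-- Indistinguishability of atoms at observer `o`: equal, or both unobservable. -/
def AtomIndist (o : L) (a₁ a₂ : Atom L) : Prop :=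
  a₁ = a₂ ∨ (¬ a₁.lab ≤ o ∧ ¬ a₂.lab ≤ o)

/-- Pointwise indistinguishability of memories. -/
def MemIndist (o : L) (μ₁ μ₂ : ℤ → Option (Atom L)) : Prop :=
  ∀ p, Option.Rel (AtomIndist o) (μ₁ p) (μ₂ p)

/-- Indistinguishability of stack elements: data matches data, return frames
match return frames, componentwise. -/
inductive EltIndist (o : L) : StkElt L → StkElt L → Prop
  | data {a₁ a₂ : Atom L} : AtomIndist o a₁ a₂ → EltIndist o (.data a₁) (.data a₂)
  | ret {a₁ a₂ : Atom L} : AtomIndist o a₁ a₂ → EltIndist o (.ret a₁) (.ret a₂)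

open Classical in
/-- Stack filtering: drop data atoms and unobservable return frames, keeping the
whole remaining stack at the first observable return frame. -/
noncomputable def stkFilter (o : L) : List (StkElt L) → List (StkElt L)
  | [] => []
  | .data _ :: σ => stkFilter o σ
  | .ret a :: σ => if a.lab ≤ o then .ret a :: σ else stkFilter o σ

/-- A state is observable when the label of its pc flows to the observer. -/
def StateObs (o : L) (s : AState L) : Prop := s.pc.lab ≤ o

/-- Indistinguishability of abstract machine states. -/
def StateIndist (o : L) (s₁ s₂ : AState L) : Prop :=
  (s₁.pc.lab ≤ o ∧ s₂.pc.lab ≤ o ∧ s₁.pc = s₂.pc ∧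
    List.Forall₂ (EltIndist o) s₁.stk s₂.stk ∧ MemIndist o s₁.mem s₂.mem) ∨
  (¬ s₁.pc.lab ≤ o ∧ ¬ s₂.pc.lab ≤ o ∧ MemIndist o s₁.mem s₂.mem ∧
    List.Forall₂ (EltIndist o) (stkFilter o s₁.stk) (stkFilter o s₂.stk))

/-- Input data for the abstract machine: program, initial stack of atoms,
memory size, initial label. -/
structure AInput (L : Type) where
  prog : InstrMem
  args : List (Atom L)
  size : ℕ
  lab : L

/-- Initial state for the abstract machine: the program is loaded as the
instruction memory, the memory consists of `size` copies of `0 @ lab`, the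
stack holds the arguments, and the pc is `0 @ lab`. -/
def aInit (i : AInput L) : InstrMem × AState L :=
  (i.prog,
   ⟨fun q => if 0 ≤ q ∧ q < (i.size : ℤ) then some ⟨0, i.lab⟩ else none,
    i.args.map .data, ⟨0, i.lab⟩⟩)

/-- The abstract machine step relation as a generic machine step (the fixed
instruction memory is part of the state and is preserved). -/
def AStepP : (InstrMem × AState L) → Option (Atom L) → (InstrMem × AState L) → Prop :=
  fun s α s' => s'.1 = s.1 ∧ AStep s.1 s.2 α s'.2

/-- Indistinguishability of abstract inputs: same program, memory size and
initial label, pointwise indistinguishable argument lists. -/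
def AInputIndist (o : L) (i₁ i₂ : AInput L) : Prop :=
  i₁.prog = i₂.prog ∧ i₁.size = i₂.size ∧ i₁.lab = i₂.lab ∧
  List.Forall₂ (AtomIndist o) i₁.args i₂.args

/-- The abstract IFC machine as a generic machine. -/
def AMachine (L : Type) [SemilatticeSup L] [OrderBot L] :
    Machine (InstrMem × AState L) (Atom L) (AInput L) :=
  ⟨AStepP, aInit⟩

end Abstract

/-! ### Auxiliary lemmas for the proof -/

section NIProof

variable {L : Type} [SemilatticeSup L] [OrderBot L]

set_option linter.unusedSectionVars false

/-- Fueled traces. -/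
inductive TracesN {S E : Type} (step : S → Option E → S → Prop) :
    ℕ → S → List E → S → Prop
  | nil (s : S) : TracesN step 0 s [] s
  | event {s₁ s₂ s₃ : S} {e : E} {t : List E} {n : ℕ} :
      step s₁ (some e) s₂ → TracesN step n s₂ t s₃ → TracesN step (n+1) s₁ (e :: t) s₃
  | silent {s₁ s₂ s₃ : S} {t : List E} {n : ℕ} :
      step s₁ none s₂ → TracesN step n s₂ t s₃ → TracesN step (n+1) s₁ t s₃

theorem traces_tracesN {S E : Type} {step : S → Option E → S → Prop} {s t s'}
    (h : Traces step s t s') : ∃ n, TracesN step n s t s' := by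
  induction h with
  | nil s => exact ⟨0, .nil s⟩
  | event h _ ih => obtain ⟨n, hn⟩ := ih; exact ⟨n+1, .event h hn⟩
  | silent h _ ih => obtain ⟨n, hn⟩ := ih; exact ⟨n+1, .silent h hn⟩

theorem tracesN_pair {n} {p p' : InstrMem × AState L} {t}
    (h : TracesN (AStepP (L := L)) n p t p') : TracesN (AStep p.1) n p.2 t p'.2 := by
  induction h with
  | nil s => exact .nil _
  | event h _ ih => obtain ⟨h1, h2⟩ := h; rw [h1] at ih; exact .event h2 ih
  | silent h _ ih => obtain ⟨h1, h2⟩ := h; rw [h1] at ih; exact .silent h2 ih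

theorem not_sup_le_left {o a b : L} (h : ¬ a ≤ o) : ¬ a ⊔ b ≤ o :=
  fun hh => h (le_sup_left.trans hh)

theorem not_sup_le_right {o a b : L} (h : ¬ b ≤ o) : ¬ a ⊔ b ≤ o :=
  fun hh => h (le_sup_right.trans hh)

theorem AtomIndist.symm {o : L} {a b : Atom L} (h : AtomIndist o a b) : AtomIndist o b a := by
  rcases h with rfl | ⟨h1, h2⟩
  · exact Or.inl rfl
  · exact Or.inr ⟨h2, h1⟩

theorem memIndist_symm {o : L} {μ₁ μ₂ : ℤ → Option (Atom L)} (h : MemIndist o μ₁ μ₂) :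
    MemIndist o μ₂ μ₁ := by
  intro p
  have hp := h p
  revert hp
  generalize μ₁ p = x
  generalize μ₂ p = y
  intro hp
  cases hp with
  | none => exact .none
  | some h => exact .some h.symm

/-- A one-sided high update preserves memory indistinguishability. -/
theorem memIndist_update_left {o : L} {μ₁ μ₁' μ₂ : ℤ → Option (Atom L)}
    (h : MemIndist o μ₁ μ₂)
    (hp : ∀ p, μ₁' p = μ₁ p ∨
      ∃ a a', μ₁ p = some a ∧ ¬ a.lab ≤ o ∧ μ₁' p = some a' ∧ ¬ a'.lab ≤ o) :
    MemIndist o μ₁' μ₂ := by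
  intro p
  rcases hp p with heq | ⟨a, a', ha, hha, ha', hha'⟩
  · rw [heq]; exact h p
  · have hp := h p
    rw [ha] at hp
    rw [ha']
    revert hp
    generalize μ₂ p = y
    intro hp
    cases hp with
    | some hab =>
      refine .some (Or.inr ⟨hha', ?_⟩)
      rcases hab with rfl | ⟨_, hb⟩
      · exact hha
      · exact hb

theorem stkFilter_forall₂ {o : L} {σ₁ σ₂ : List (StkElt L)}
    (h : List.Forall₂ (EltIndist o) σ₁ σ₂) :
    List.Forall₂ (EltIndist o) (stkFilter o σ₁) (stkFilter o σ₂) := by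
  induction h with
  | nil => exact .nil
  | cons hd tl ih =>
    cases hd with
    | data _ => simpa [stkFilter] using ih
    | @ret a₁ a₂ h =>
      rcases h with rfl | ⟨h1, h2⟩
      · by_cases hle : a₁.lab ≤ o
        · simpa [stkFilter, hle] using List.Forall₂.cons (.ret (Or.inl rfl)) tl
        · simpa [stkFilter, hle] using ih
      · simpa [stkFilter, h1, h2] using ih

theorem stkFilter_map_data {o : L} (l : List (Atom L)) :
    stkFilter o (l.map .data) = [] := by
  induction l with
  | nil => rfl
  | cons a l ih => simpa [stkFilter] using ih

theorem memIndist_upd {o : L} {μ₁ μ₂ : ℤ → Option (Atom L)} {p : ℤ} {a a' : Atom L}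
    (hmem : MemIndist o μ₁ μ₂) (h : AtomIndist o a a') :
    MemIndist o (updMem μ₁ p a) (updMem μ₂ p a') := by
  intro q
  by_cases hq : q = p
  · subst hq; simp only [updMem, if_pos rfl]; exact .some h
  · simp only [updMem, if_neg hq]; exact hmem q

/-- A store through a high pointer preserves indistinguishability. -/
theorem store_high_pres {o : L} {μ μ' : ℤ → Option (Atom L)} {p m k : ℤ}
    {L₁ L₂ L₃ Lpc : L} (hmem : MemIndist o μ μ')
    (hm : μ p = some ⟨k, L₃⟩) (hle : L₁ ⊔ Lpc ≤ L₃) (h1 : ¬ L₁ ≤ o) :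
    MemIndist o (updMem μ p ⟨m, L₁ ⊔ L₂ ⊔ Lpc⟩) μ' := by
  refine memIndist_update_left hmem fun q => ?_
  by_cases hq : q = p
  · subst hq
    exact Or.inr ⟨⟨k, L₃⟩, ⟨m, L₁ ⊔ L₂ ⊔ Lpc⟩, hm,
      fun hc => h1 (le_trans (le_sup_left.trans hle) hc), by simp [updMem],
      not_sup_le_left (not_sup_le_left h1)⟩
  · exact Or.inl (by simp [updMem, hq])

/-- Relation between the actions of two lock-step low steps. -/
def ActRel (o : L) (α₁ α₂ : Option (Atom L)) : Prop :=
  (α₁ = none ∧ α₂ = none) ∨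
  ∃ e₁ e₂, α₁ = some e₁ ∧ α₂ = some e₂ ∧ AtomIndist o e₁ e₂

/-- Unwinding: lock-step low steps. -/
theorem low_step {ι : InstrMem} {o : L} {μ₁ μ₂ : ℤ → Option (Atom L)}
    {σ₁ σ₂ : List (StkElt L)} {n : ℤ} {Lpc : L} {α₁ α₂ : Option (Atom L)}
    {s₁' s₂' : AState L}
    (hpc : Lpc ≤ o)
    (hstk : List.Forall₂ (EltIndist o) σ₁ σ₂)
    (hmem : MemIndist o μ₁ μ₂)
    (h₁ : AStep ι ⟨μ₁, σ₁, ⟨n, Lpc⟩⟩ α₁ s₁')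
    (h₂ : AStep ι ⟨μ₂, σ₂, ⟨n, Lpc⟩⟩ α₂ s₂') :
    StateIndist o s₁' s₂' ∧ ActRel o α₁ α₂ := by
  cases h₁ with
  | @add _ _ _ n₁ n₂ _ L₁ L₂ hι₁ =>
    cases h₂ <;> try (exfalso; simp_all; done)
    rcases hstk with _ | ⟨ha, _ | ⟨hb, hstk⟩⟩
    cases ha with | data ha => ?_
    cases hb with | data hb => ?_
    refine ⟨Or.inl ⟨hpc, hpc, rfl, .cons (.data ?_) hstk, hmem⟩, Or.inl ⟨rfl, rfl⟩⟩
    rcases ha with ha | ⟨h1, h2⟩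
    · rcases hb with hb | ⟨h3, h4⟩
      · injection ha with e1 e2; injection hb with e3 e4
        subst e1; subst e2; subst e3; subst e4
        exact Or.inl rfl
      · exact Or.inr ⟨not_sup_le_right h3, not_sup_le_right h4⟩
    · exact Or.inr ⟨not_sup_le_left h1, not_sup_le_left h2⟩
  | @push _ _ _ m _ hι₁ =>
    cases h₂ <;> try (exfalso; simp_all; done)
    rename ι _ = some (Instr.push _) => hι₂
    rw [hι₁] at hι₂
    injection hι₂ with hι₂
    injection hι₂ with hι₂
    subst hι₂
    exact ⟨Or.inl ⟨hpc, hpc, rfl, .cons (.data (Or.inl rfl)) hstk, hmem⟩,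
      Or.inl ⟨rfl, rfl⟩⟩
  | @load _ _ _ p m _ L₁ L₂ hι₁ hm₁ =>
    cases h₂ <;> try (exfalso; simp_all; done)
    rename μ₂ _ = some _ => hm₂
    rcases hstk with _ | ⟨ha, hstk⟩
    cases ha with | data ha => ?_
    refine ⟨Or.inl ⟨hpc, hpc, rfl, .cons (.data ?_) hstk, hmem⟩, Or.inl ⟨rfl, rfl⟩⟩
    rcases ha with ha | ⟨h1, h2⟩
    · injection ha with e1 e2; subst e1; subst e2
      have hp := hmem p
      rw [hm₁, hm₂] at hp
      cases hp with | some hab => ?_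
      rcases hab with hab | ⟨h3, h4⟩
      · injection hab with e3 e4; subst e3; subst e4
        exact Or.inl rfl
      · exact Or.inr ⟨not_sup_le_right h3, not_sup_le_right h4⟩
    · exact Or.inr ⟨not_sup_le_left h1, not_sup_le_left h2⟩
  | @store _ _ _ p m k _ L₁ L₂ L₃ hι₁ hm₁ hle₁ =>
    cases h₂ <;> try (exfalso; simp_all; done)
    rename μ₂ _ = some _ => hm₂
    rename _ ⊔ Lpc ≤ _ => hle₂
    rcases hstk with _ | ⟨ha, _ | ⟨hb, hstk⟩⟩
    cases ha with | data ha => ?_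
    cases hb with | data hb => ?_
    refine ⟨Or.inl ⟨hpc, hpc, rfl, hstk, ?_⟩, Or.inl ⟨rfl, rfl⟩⟩
    rcases ha with ha | ⟨h1, h2⟩
    · injection ha with e1 e2; subst e1; subst e2
      refine memIndist_upd hmem ?_
      rcases hb with hb | ⟨h3, h4⟩
      · injection hb with e3 e4; subst e3; subst e4
        exact Or.inl rfl
      · exact Or.inr ⟨not_sup_le_left (not_sup_le_right h3),
          not_sup_le_left (not_sup_le_right h4)⟩
    · exact memIndist_symm
        (store_high_pres (memIndist_symm (store_high_pres hmem hm₁ hle₁ h1)) hm₂ hle₂ h2)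
  | @jump _ _ _ n' _ L₁ hι₁ =>
    cases h₂ <;> try (exfalso; simp_all; done)
    rcases hstk with _ | ⟨ha, hstk⟩
    cases ha with | data ha => ?_
    refine ⟨?_, Or.inl ⟨rfl, rfl⟩⟩
    rcases ha with ha | ⟨h1, h2⟩
    · injection ha with e1 e2; subst e1; subst e2
      by_cases hl : L₁ ⊔ Lpc ≤ o
      · exact Or.inl ⟨hl, hl, rfl, hstk, hmem⟩
      · exact Or.inr ⟨hl, hl, hmem, stkFilter_forall₂ hstk⟩
    · exact Or.inr ⟨not_sup_le_left h1, not_sup_le_left h2, hmem,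
        stkFilter_forall₂ hstk⟩
  | @bnz _ _ _ m k _ L₁ hι₁ =>
    cases h₂ <;> try (exfalso; simp_all; done)
    rename ι _ = some (Instr.bnz _) => hι₂
    rw [hι₁] at hι₂
    injection hι₂ with hι₂
    injection hι₂ with hι₂
    subst hι₂
    rcases hstk with _ | ⟨ha, hstk⟩
    cases ha with | data ha => ?_
    refine ⟨?_, Or.inl ⟨rfl, rfl⟩⟩
    rcases ha with ha | ⟨h1, h2⟩
    · injection ha with e1 e2; subst e1; subst e2
      by_cases hl : L₁ ⊔ Lpc ≤ o
      · exact Or.inl ⟨hl, hl, rfl, hstk, hmem⟩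
      · exact Or.inr ⟨hl, hl, hmem, stkFilter_forall₂ hstk⟩
    · exact Or.inr ⟨not_sup_le_left h1, not_sup_le_left h2, hmem,
        stkFilter_forall₂ hstk⟩
  | @call _ _ _ n' _ L₁ hι₁ =>
    cases h₂ <;> try (exfalso; simp_all; done)
    rcases hstk with _ | ⟨ha, hstk⟩
    cases ha with | data ha => ?_
    refine ⟨?_, Or.inl ⟨rfl, rfl⟩⟩
    rcases ha with ha | ⟨h1, h2⟩
    · injection ha with e1 e2; subst e1; subst e2
      by_cases hl : L₁ ⊔ Lpc ≤ o
      · exact Or.inl ⟨hl, hl, rfl, .cons (.ret (Or.inl rfl)) hstk, hmem⟩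
      · refine Or.inr ⟨hl, hl, hmem, ?_⟩
        simpa [stkFilter, hpc] using List.Forall₂.cons (EltIndist.ret (Or.inl rfl)) hstk
    · refine Or.inr ⟨not_sup_le_left h1, not_sup_le_left h2, hmem, ?_⟩
      simpa [stkFilter, hpc] using List.Forall₂.cons (EltIndist.ret (Or.inl rfl)) hstk
  | @ret _ _ _ _ pc' hι₁ =>
    cases h₂ <;> try (exfalso; simp_all; done)
    rcases hstk with _ | ⟨ha, hstk⟩
    cases ha with | ret ha => ?_
    refine ⟨?_, Or.inl ⟨rfl, rfl⟩⟩
    rcases ha with rfl | ⟨h1, h2⟩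
    · by_cases hl : pc'.lab ≤ o
      · exact Or.inl ⟨hl, hl, rfl, hstk, hmem⟩
      · exact Or.inr ⟨hl, hl, hmem, stkFilter_forall₂ hstk⟩
    · exact Or.inr ⟨h1, h2, hmem, stkFilter_forall₂ hstk⟩
  | @output _ _ _ m _ L₁ hι₁ =>
    cases h₂ <;> try (exfalso; simp_all; done)
    rcases hstk with _ | ⟨ha, hstk⟩
    cases ha with | data ha => ?_
    refine ⟨Or.inl ⟨hpc, hpc, rfl, hstk, hmem⟩, Or.inr ⟨_, _, rfl, rfl, ?_⟩⟩
    rcases ha with ha | ⟨h1, h2⟩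
    · injection ha with e1 e2; subst e1; subst e2
      exact Or.inl rfl
    · exact Or.inr ⟨not_sup_le_left h1, not_sup_le_left h2⟩

/-- Unwinding: a step from a high state. -/
theorem high_step {ι : InstrMem} {o : L} {s s' : AState L} {α : Option (Atom L)}
    (hpc : ¬ s.pc.lab ≤ o) (h : AStep ι s α s') :
    (∀ e, α = some e → ¬ e.lab ≤ o) ∧
    ((¬ s'.pc.lab ≤ o ∧ stkFilter o s'.stk = stkFilter o s.stk ∧
        ∀ p, s'.mem p = s.mem p ∨
          ∃ a a', s.mem p = some a ∧ ¬ a.lab ≤ o ∧ s'.mem p = some a' ∧ ¬ a'.lab ≤ o) ∨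
      (s'.pc.lab ≤ o ∧ α = none ∧
        ∃ σ', s.stk = .ret s'.pc :: σ' ∧ s'.stk = σ' ∧ s'.mem = s.mem)) := by
  obtain ⟨μ, σ, pc⟩ := s
  obtain ⟨npc, Lpc⟩ := pc
  replace hpc : ¬ Lpc ≤ o := hpc
  cases h with
  | add hι =>
      exact ⟨fun e he => (nomatch he),
        Or.inl ⟨hpc, by simp [stkFilter], fun p => Or.inl rfl⟩⟩
  | push hι =>
      exact ⟨fun e he => (nomatch he),
        Or.inl ⟨hpc, by simp [stkFilter], fun p => Or.inl rfl⟩⟩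
  | load hι hl =>
      exact ⟨fun e he => (nomatch he),
        Or.inl ⟨hpc, by simp [stkFilter], fun p => Or.inl rfl⟩⟩
  | @store _ _ _ p₀ m k _ L₁ L₂ L₃ hι hl hle =>
      refine ⟨fun e he => (nomatch he), Or.inl ⟨hpc, by simp [stkFilter], fun q => ?_⟩⟩
      by_cases hq : q = p₀
      · subst hq
        refine Or.inr ⟨⟨k, L₃⟩, ⟨m, L₁ ⊔ L₂ ⊔ Lpc⟩, hl,
          fun hc => hpc (le_trans (le_sup_right.trans hle) hc), by simp [updMem],
          fun hc => hpc (le_trans le_sup_right hc)⟩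
      · exact Or.inl (by simp [updMem, hq])
  | jump hι =>
      exact ⟨fun e he => (nomatch he),
        Or.inl ⟨not_sup_le_right hpc, by simp [stkFilter], fun p => Or.inl rfl⟩⟩
  | bnz hι =>
      exact ⟨fun e he => (nomatch he),
        Or.inl ⟨not_sup_le_right hpc, by simp [stkFilter], fun p => Or.inl rfl⟩⟩
  | call hι =>
      exact ⟨fun e he => (nomatch he),
        Or.inl ⟨not_sup_le_right hpc, by simp [stkFilter, hpc], fun p => Or.inl rfl⟩⟩
  | @ret _ σ' _ _ pc' hι =>
      refine ⟨fun e he => (nomatch he), ?_⟩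
      by_cases hr : pc'.lab ≤ o
      · exact Or.inr ⟨hr, rfl, σ', rfl, rfl, rfl⟩
      · exact Or.inl ⟨hr, by simp [stkFilter, hr], fun p => Or.inl rfl⟩
  | output hι =>
      refine ⟨fun e he => ?_, Or.inl ⟨hpc, by simp [stkFilter], fun p => Or.inl rfl⟩⟩
      cases he
      exact not_sup_le_right hpc

/-- The main unwinding argument, by strong induction on total fuel. -/
theorem main_ni {ι : InstrMem} {o : L} :
    ∀ N n₁ n₂ (s₁ s₂ : AState L) t₁ t₂ (s₁' s₂' : AState L), n₁ + n₂ ≤ N →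
      StateIndist o s₁ s₂ →
      TracesN (AStep ι) n₁ s₁ t₁ s₁' → TracesN (AStep ι) n₂ s₂ t₂ s₂' →
      IndistTrace (filterObs (fun a : Atom L => a.lab ≤ o) t₁)
        (filterObs (fun a : Atom L => a.lab ≤ o) t₂) := by
  intro N
  induction N with
  | zero =>
    intro n₁ n₂ s₁ s₂ t₁ t₂ s₁' s₂' hN hsi d₁ d₂
    have h1 : n₁ = 0 := by omega
    subst h1
    cases d₁
    simp only [filterObs]
    exact .nilL _
  | succ N ih =>
    intro n₁ n₂ s₁ s₂ t₁ t₂ s₁' s₂' hN hsi d₁ d₂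
    rcases hsi with ⟨hl₁, hl₂, hpceq, hstk, hmem⟩ | ⟨hh₁, hh₂, hmem, hstkf⟩
    · -- low case
      obtain ⟨μ₁, σ₁, pc₁⟩ := s₁
      obtain ⟨μ₂, σ₂, pc₂⟩ := s₂
      replace hpceq : pc₁ = pc₂ := hpceq
      subst hpceq
      obtain ⟨np, Lp⟩ := pc₁
      replace hl₁ : Lp ≤ o := hl₁
      replace hstk : List.Forall₂ (EltIndist o) σ₁ σ₂ := hstk
      replace hmem : MemIndist o μ₁ μ₂ := hmem
      cases d₁ with
      | nil => simp only [filterObs]; exact .nilL _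
      | @event _ _ _ ev₁ _ _ h₁ r₁ =>
        cases d₂ with
        | nil => simp only [filterObs]; exact .nilR _
        | @event _ _ _ ev₂ _ _ h₂ r₂ =>
          obtain ⟨hsi', hact⟩ := low_step hl₁ hstk hmem h₁ h₂
          rcases hact with ⟨h, -⟩ | ⟨e₁, e₂, he₁, he₂, hind⟩
          · exact nomatch h
          · cases he₁
            cases he₂
            rcases hind with heq | ⟨hh1, hh2⟩
            · cases heq
              by_cases hobs : ev₁.lab ≤ o
              · simp only [filterObs, if_pos hobs]
                exact .cons _ (ih _ _ _ _ _ _ _ _ (by omega) hsi' r₁ r₂)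
              · simp only [filterObs, if_neg hobs]
                exact ih _ _ _ _ _ _ _ _ (by omega) hsi' r₁ r₂
            · simp only [filterObs, if_neg hh1, if_neg hh2]
              exact ih _ _ _ _ _ _ _ _ (by omega) hsi' r₁ r₂
        | silent h₂ r₂ =>
          obtain ⟨hsi', hact⟩ := low_step hl₁ hstk hmem h₁ h₂
          rcases hact with ⟨h, -⟩ | ⟨e₁, e₂, he₁, he₂, -⟩
          · exact nomatch h
          · exact nomatch he₂
      | silent h₁ r₁ =>
        cases d₂ with
        | nil => simp only [filterObs]; exact .nilR _
        | event h₂ r₂ =>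
          obtain ⟨hsi', hact⟩ := low_step hl₁ hstk hmem h₁ h₂
          rcases hact with ⟨-, h⟩ | ⟨e₁, e₂, he₁, he₂, -⟩
          · exact nomatch h
          · exact nomatch he₁
        | silent h₂ r₂ =>
          obtain ⟨hsi', hact⟩ := low_step hl₁ hstk hmem h₁ h₂
          exact ih _ _ _ _ _ _ _ _ (by omega) hsi' r₁ r₂
    · -- high case
      cases d₁ with
      | nil => simp only [filterObs]; exact .nilL _
      | event h₁ r₁ =>
        obtain ⟨hev, hcase⟩ := high_step hh₁ h₁
        rcases hcase with ⟨hh', hsf, hmp⟩ | ⟨-, habs, -⟩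
        · have hne := hev _ rfl
          simp only [filterObs, if_neg hne]
          exact ih _ _ _ _ _ _ _ _ (by omega)
            (Or.inr ⟨hh', hh₂, memIndist_update_left hmem hmp, hsf ▸ hstkf⟩) r₁ d₂
        · exact nomatch habs
      | silent h₁ r₁ =>
        obtain ⟨-, hcase⟩ := high_step hh₁ h₁
        rcases hcase with ⟨hh', hsf, hmp⟩ | ⟨hlow₁, -, σ₁', hstk₁, hstk₁', hmem₁⟩
        · exact ih _ _ _ _ _ _ _ _ (by omega)
            (Or.inr ⟨hh', hh₂, memIndist_update_left hmem hmp, hsf ▸ hstkf⟩) r₁ d₂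
        · -- side 1 returns to low
          cases d₂ with
          | nil => simp only [filterObs]; exact .nilR _
          | event h₂ r₂ =>
            obtain ⟨hev₂, hcase₂⟩ := high_step hh₂ h₂
            rcases hcase₂ with ⟨hh₂', hsf₂, hmp₂⟩ | ⟨-, habs, -⟩
            · have hne := hev₂ _ rfl
              simp only [filterObs, if_neg hne]
              exact ih _ _ _ _ _ _ _ _ (by omega)
                (Or.inr ⟨hh₁, hh₂',
                  memIndist_symm (memIndist_update_left (memIndist_symm hmem) hmp₂),
                  hsf₂ ▸ hstkf⟩)
                (TracesN.silent h₁ r₁) r₂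
            · exact nomatch habs
          | silent h₂ r₂ =>
            obtain ⟨-, hcase₂⟩ := high_step hh₂ h₂
            rcases hcase₂ with ⟨hh₂', hsf₂, hmp₂⟩ | ⟨hlow₂, -, σ₂', hstk₂, hstk₂', hmem₂⟩
            · exact ih _ _ _ _ _ _ _ _ (by omega)
                (Or.inr ⟨hh₁, hh₂',
                  memIndist_symm (memIndist_update_left (memIndist_symm hmem) hmp₂),
                  hsf₂ ▸ hstkf⟩)
                (TracesN.silent h₁ r₁) r₂
            · -- both return to low
              rw [hstk₁, hstk₂] at hstkf
              simp only [stkFilter, if_pos hlow₁, if_pos hlow₂] at hstkf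
              rcases hstkf with _ | ⟨hret, htail⟩
              cases hret with
              | ret hret =>
                rcases hret with hret | ⟨hcontr, -⟩
                · refine ih _ _ _ _ _ _ _ _ (by omega) (Or.inl ?_) r₁ r₂
                  refine ⟨hlow₁, hret ▸ hlow₁, hret, ?_, ?_⟩
                  · rw [hstk₁', hstk₂']; exact htail
                  · rw [hmem₁, hmem₂]; exact hmem
                · exact absurd hlow₁ hcontr

theorem forall₂_map_data {o : L} {l₁ l₂ : List (Atom L)}
    (h : List.Forall₂ (AtomIndist o) l₁ l₂) :
    List.Forall₂ (EltIndist o) (l₁.map .data) (l₂.map .data) := by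
  induction h with
  | nil => exact .nil
  | cons hd _ ih => exact .cons (.data hd) ih

theorem memIndist_refl {o : L} (μ : ℤ → Option (Atom L)) : MemIndist o μ μ := by
  intro p
  have hp : Option.Rel (AtomIndist o) (μ p) (μ p) := by
    cases h : μ p with
    | none => exact .none
    | some a => exact .some (Or.inl rfl)
  exact hp

end NIProof

/-- The abstract IFC machine satisfies TINI for the stated
notion of observation. -/
theorem abstract_machine_tini {L : Type} [SemilatticeSup L] [OrderBot L] :
    TINI (AMachine L) (fun (o : L) (a : Atom L) => a.lab ≤ o) AInputIndist := by
  intro o i₁ i₂ t₁ t₂ hi he₁ he₂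
  obtain ⟨p₁, args₁, sz₁, lab₁⟩ := i₁
  obtain ⟨p₂, args₂, sz₂, lab₂⟩ := i₂
  obtain ⟨hprog, hsize, hlab, hargs⟩ := hi
  replace hprog : p₁ = p₂ := hprog
  replace hsize : sz₁ = sz₂ := hsize
  replace hlab : lab₁ = lab₂ := hlab
  subst hprog; subst hsize; subst hlab
  obtain ⟨s1f, htr₁⟩ := he₁
  obtain ⟨s2f, htr₂⟩ := he₂
  obtain ⟨n₁, d₁⟩ := traces_tracesN htr₁
  obtain ⟨n₂, d₂⟩ := traces_tracesN htr₂
  have d1p := tracesN_pair d₁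
  have d2p := tracesN_pair d₂
  have hinit : StateIndist o (aInit ⟨p₁, args₁, sz₁, lab₁⟩).2
      (aInit ⟨p₁, args₂, sz₁, lab₁⟩).2 := by
    by_cases hl : lab₁ ≤ o
    · exact Or.inl ⟨hl, hl, rfl, forall₂_map_data hargs, memIndist_refl _⟩
    · refine Or.inr ⟨hl, hl, memIndist_refl _, ?_⟩
      show List.Forall₂ (EltIndist o) (stkFilter o (args₁.map .data))
        (stkFilter o (args₂.map .data))
      rw [stkFilter_map_data, stkFilter_map_data]
      exact .nil
  exact main_ni (n₁ + n₂) n₁ n₂ _ _ t₁ t₂ _ _ le_rfl hinit d1p d2p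
end

section
/- (Unwinding condition for unobservable steps of the abstract IFC machine.) Let o be an observer label. If abstract machine states s₁ ≈ˢ_o s₂ are indistinguishable, s₁ steps to s₁', and both s₁ and s₁' are unobservable to o, then s₁' ≈ˢ_o s₂. -/
section Helpers

variable {L : Type} [SemilatticeSup L] [OrderBot L]

lemma stkFilter_data (o : L) (a : Atom L) (σ : List (StkElt L)) :
    stkFilter o (.data a :: σ) = stkFilter o σ := by
  simp [stkFilter]

lemma stkFilter_ret_unobs (o : L) (a : Atom L) (σ : List (StkElt L))
    (h : ¬ a.lab ≤ o) : stkFilter o (.ret a :: σ) = stkFilter o σ := by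
  simp [stkFilter, h]

end Helpers

/-- Unwinding condition for unobservable steps of the abstract
IFC machine: an unobservable step from an unobservable state preserves
indistinguishability with the other state. -/
theorem abstract_unwinding_unobservable {L : Type} [SemilatticeSup L] [OrderBot L]
    (ι : InstrMem) (o : L) (s₁ s₂ s₁' : AState L) (α₁ : Option (Atom L))
    (hind : StateIndist o s₁ s₂)
    (h₁ : AStep ι s₁ α₁ s₁')
    (hno : ¬ StateObs o s₁) (hno' : ¬ StateObs o s₁') :
    StateIndist o s₁' s₂ := by
  rcases hind with ⟨h1, _⟩ | ⟨hun₁, hun₂, hmem, hstk⟩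
  · exact absurd h1 hno
  refine Or.inr ⟨hno', hun₂, ?_, ?_⟩
  · -- memory indistinguishability
    cases h₁ with
    | @store μ σ n p m k Lpc L₁ L₂ L₃ hι hμ hle =>
      have hLpc : ¬ Lpc ≤ o := hun₁
      intro q
      dsimp only
      by_cases hq : q = p
      · subst hq
        have h2 : Option.Rel (AtomIndist o) (μ q) (s₂.mem q) := hmem q
        rw [hμ] at h2
        generalize s₂.mem q = b at h2 ⊢
        cases h2 with
        | some ha =>
          rename_i a₂
          rw [show updMem μ q ⟨m, L₁ ⊔ L₂ ⊔ Lpc⟩ q = some ⟨m, L₁ ⊔ L₂ ⊔ Lpc⟩ by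
            simp [updMem]]
          refine Option.Rel.some (Or.inr ⟨?_, ?_⟩)
          · exact fun h => hLpc (le_trans (le_sup_right) h)
          · rcases ha with rfl | ⟨_, hb⟩
            · exact fun h => hLpc (le_trans (le_trans le_sup_right hle) h)
            · exact hb
      · have : updMem μ p ⟨m, L₁ ⊔ L₂ ⊔ Lpc⟩ q = μ q := by simp [updMem, hq]
        rw [this]
        exact hmem q
    | _ => exact hmem
  · -- stack filter indistinguishability
    cases h₁ with
    | add _ => simpa [stkFilter_data] using hstk
    | push _ => simpa [stkFilter_data] using hstk
    | load _ _ => simpa [stkFilter_data] using hstk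
    | store _ _ _ => simpa [stkFilter_data] using hstk
    | jump _ => simpa [stkFilter_data] using hstk
    | bnz _ => simpa [stkFilter_data] using hstk
    | @call μ σ n n' Lpc L₁ _ =>
      have hLpc : ¬ Lpc ≤ o := hun₁
      dsimp only
      rw [stkFilter_ret_unobs o ⟨n + 1, Lpc⟩ σ hLpc]
      simpa [stkFilter_data] using hstk
    | ret _ =>
      rw [stkFilter_ret_unobs o _ _ hno'] at hstk
      exact hstk
    | output _ => simpa [stkFilter_data] using hstk
end

section
/- (Unwinding condition for steps of the abstract IFC machine returning to observable states.) Let o be an observer label. If abstract machine states s₁ ≈ˢ_o s₂ are indistinguishable, s₁ is unobservable to o and steps to an observable state s₁', and s₂ steps to an observable state s₂', then s₁' ≈ˢ_o s₂'. -/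
lemma step_ret_of_obs {L : Type} [SemilatticeSup L] [OrderBot L] {ι : InstrMem}
    {s s' : AState L} {α : Option (Atom L)} {o : L} (h : AStep ι s α s')
    (hno : ¬ s.pc.lab ≤ o) (hobs : s'.pc.lab ≤ o) :
    ∃ pc', s.stk = .ret pc' :: s'.stk ∧ s'.mem = s.mem ∧ s'.pc = pc' := by
  cases h with
  | add h => exact absurd hobs hno
  | push h => exact absurd hobs hno
  | load h h' => exact absurd hobs hno
  | store h h' h'' => exact absurd hobs hno
  | jump h => exact absurd (le_trans le_sup_right hobs) hno
  | bnz h => exact absurd (le_trans le_sup_right hobs) hno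
  | call h => exact absurd (le_trans le_sup_right hobs) hno
  | output h => exact absurd hobs hno
  | ret h => exact ⟨_, rfl, rfl, rfl⟩

/-- Unwinding condition for steps of the abstract IFC machine
returning to observable states: if two indistinguishable unobservable states both
step to observable states, the resulting states are indistinguishable. -/
theorem abstract_unwinding_return {L : Type} [SemilatticeSup L] [OrderBot L]
    (ι : InstrMem) (o : L) (s₁ s₂ s₁' s₂' : AState L) (α₁ α₂ : Option (Atom L))
    (hind : StateIndist o s₁ s₂)
    (hno : ¬ StateObs o s₁)
    (h₁ : AStep ι s₁ α₁ s₁') (hobs₁' : StateObs o s₁')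
    (h₂ : AStep ι s₂ α₂ s₂') (hobs₂' : StateObs o s₂') :
    StateIndist o s₁' s₂' := by
  rcases hind with ⟨h, _⟩ | ⟨hno₁, hno₂, hmem, hstk⟩
  · exact absurd h hno
  obtain ⟨pc₁, hs₁, hm₁, hp₁⟩ := step_ret_of_obs h₁ hno₁ hobs₁'
  obtain ⟨pc₂, hs₂, hm₂, hp₂⟩ := step_ret_of_obs h₂ hno₂ hobs₂'
  have ho₁ : pc₁.lab ≤ o := hp₁ ▸ hobs₁'
  have ho₂ : pc₂.lab ≤ o := hp₂ ▸ hobs₂'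
  rw [hs₁, hs₂] at hstk
  rw [stkFilter, if_pos ho₁, stkFilter, if_pos ho₂] at hstk
  rcases hstk with - | ⟨he, htl⟩
  have hpc : pc₁ = pc₂ := by
    cases he with
    | ret hai => exact hai.resolve_right (fun h => h.1 ho₁)
  left
  refine ⟨hobs₁', hobs₂', ?_, ?_, ?_⟩
  · rw [hp₁, hp₂, hpc]
  · exact htl
  · rw [hm₁, hm₂]; exact hmem
end

section
/- (Unobservable abstract states emit unobservable actions.) Let o be an observer label. If an abstract machine state s is unobservable to o (its pc label is not ≤ o) and s steps with action α, then α is unobservable by o (α is silent or an event whose label is not ≤ o). -/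
/-- Unobservable abstract states emit unobservable actions: if
the pc label of `s` does not flow to `o` and `s` steps with action `α`, then `α`
is silent or an event whose label does not flow to `o`. -/
theorem abstract_unobservable_state_unobservable_action
    {L : Type} [SemilatticeSup L] [OrderBot L]
    (ι : InstrMem) (o : L) (s s' : AState L) (α : Option (Atom L))
    (hno : ¬ s.pc.lab ≤ o) (h : AStep ι s α s') :
    α = none ∨ ∃ e : Atom L, α = some e ∧ ¬ e.lab ≤ o := by
  cases h with
  | output hi =>
    right
    refine ⟨_, rfl, fun hle => hno ?_⟩
    exact le_trans le_sup_right hle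
  | _ => left; rfl
end
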